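/- arXiv:0902.4074 — 3 statements merged into one kernel-verified Lean document; each statement's English description precedes it below -/
import Mathlib

section
/- Let ψ : 𝔫⁺ → ℂ be a Lie algebra homomorphism with ψ(L_1) ≠ 0, ψ(L_2) ≠ 0, ψ(I_1) ≠ 0. For every integer m ≥ 1, every pseudopartition λ and every partition μ, one has maxdeg([I_m, L_{−λ}I_{−μ}]w) ≤ |λ| + |μ| − m + 1 in M_ψ. -/
/-!
Common setup: the twisted Heisenberg–Virasoro algebra `𝒱`, its subalgebra `𝔫⁺`,
the universal Whittaker module `M_ψ`, the quotients `L_{ψ,ξ}`, and the notions of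
Whittaker vectors/modules, degrees, etc.
-/

open UniversalEnvelopingAlgebra

attribute [local instance 100] LieRing.ofAssociativeRing

/-- The twisted Heisenberg–Virasoro algebra: a complex Lie algebra with basis
`{L k, I k (k : ℤ), z 0, z 1, z 2}` (here `z 0, z 1, z 2` are the paper's `z₁, z₂, z₃`)
and the prescribed brackets. -/
class THV (V : Type) [LieRing V] [LieAlgebra ℂ V] : Type where
  L : ℤ → V
  I : ℤ → V
  z : Fin 3 → V
  basis : Module.Basis (ℤ ⊕ ℤ ⊕ Fin 3) ℂ V
  basis_L : ∀ k : ℤ, basis (Sum.inl k) = L k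
  basis_I : ∀ k : ℤ, basis (Sum.inr (Sum.inl k)) = I k
  basis_z : ∀ i : Fin 3, basis (Sum.inr (Sum.inr i)) = z i
  lie_LL : ∀ k j : ℤ, ⁅L k, L j⁆ =
    ((j : ℂ) - (k : ℂ)) • L (k + j) +
      (if j = -k then ((k : ℂ) ^ 3 - (k : ℂ)) / 12 else 0) • z 0
  lie_LI : ∀ k j : ℤ, ⁅L k, I j⁆ =
    (j : ℂ) • I (k + j) + (if j = -k then (k : ℂ) ^ 2 - (k : ℂ) else 0) • z 1
  lie_II : ∀ k j : ℤ, ⁅I k, I j⁆ = (if j = -k then (k : ℂ) else 0) • z 2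
  lie_z : ∀ i : Fin 3, ∀ x : V, ⁅z i, x⁆ = 0

namespace THV

variable (V : Type) [LieRing V] [LieAlgebra ℂ V] [THV V]

/-- `𝔫⁺ = span {L k, I k : k ≥ 1}` (a Lie subalgebra of `𝒱`). -/
def nPlus : LieSubalgebra ℂ V :=
  LieSubalgebra.lieSpan ℂ V {x | ∃ k : ℤ, 1 ≤ k ∧ (x = L k ∨ x = I k)}

theorem L_mem_nPlus {k : ℤ} (h : 1 ≤ k) : (L k : V) ∈ nPlus V :=
  LieSubalgebra.subset_lieSpan ⟨k, h, Or.inl rfl⟩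

theorem I_mem_nPlus {k : ℤ} (h : 1 ≤ k) : (I k : V) ∈ nPlus V :=
  LieSubalgebra.subset_lieSpan ⟨k, h, Or.inr rfl⟩

/-- A Whittaker vector of type `ψ` in a `𝒱`-module `W`. -/
def IsWhittakerVector (ψ : nPlus V →ₗ⁅ℂ⁆ ℂ) {W : Type} [AddCommGroup W] [Module ℂ W]
    [LieRingModule V W] (w : W) : Prop :=
  ∀ x : nPlus V, ⁅(x : V), w⁆ = ψ x • w

/-- The universal enveloping algebra `U(𝒱)`. -/
abbrev UEA := UniversalEnvelopingAlgebra ℂ V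

/-- The canonical embedding `𝒱 → U(𝒱)`. -/
noncomputable def ιV : V →ₗ⁅ℂ⁆ UEA V := UniversalEnvelopingAlgebra.ι ℂ

/-- The four central elements `z₀ = I₀, z₁, z₂, z₃` of `U(𝒱)`. -/
noncomputable def zElt : Fin 4 → UEA V
  | 0 => ιV V (I 0)
  | 1 => ιV V (z 0)
  | 2 => ιV V (z 1)
  | 3 => ιV V (z 2)

/-- The left ideal of `U(𝒱)` generated by `{x - ψ(x) : x ∈ 𝔫⁺}`;
`M_ψ = U(𝒱) ⊗_{U(𝔫⁺)} ℂ_ψ` is canonically the quotient by this left ideal. -/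
noncomputable def whittakerIdeal (ψ : nPlus V →ₗ⁅ℂ⁆ ℂ) : Submodule (UEA V) (UEA V) :=
  Submodule.span (UEA V)
    {u | ∃ x : nPlus V, u = ιV V (x : V) - algebraMap ℂ (UEA V) (ψ x)}

/-- The universal Whittaker module `M_ψ`. -/
abbrev Mpsi (ψ : nPlus V →ₗ⁅ℂ⁆ ℂ) := (UEA V) ⧸ whittakerIdeal V ψ

/-- Any quotient of `U(𝒱)` (as a left module over itself) is a `𝒱`-module. -/
noncomputable instance (p : Submodule (UEA V) (UEA V)) : LieRingModule V ((UEA V) ⧸ p) :=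
  letI : LieRingModule (UEA V) ((UEA V) ⧸ p) := LieRingModule.ofAssociativeModule
  LieRingModule.compLieHom _ (ιV V)

noncomputable instance (p : Submodule (UEA V) (UEA V)) : LieModule ℂ V ((UEA V) ⧸ p) :=
  letI : LieRingModule (UEA V) ((UEA V) ⧸ p) := LieRingModule.ofAssociativeModule
  letI : LieModule ℂ (UEA V) ((UEA V) ⧸ p) := LieModule.ofAssociativeModule
  LieModule.compLieHom _ (ιV V)

/-- The cyclic Whittaker vector `w = 1 ⊗ 1` of `M_ψ`. -/
noncomputable def mw (ψ : nPlus V →ₗ⁅ℂ⁆ ℂ) : Mpsi V ψ :=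
  Submodule.Quotient.mk 1

/-- The submodule `Σ_{i} (z_i − ξ_i·1) M_ψ` of `M_ψ`. -/
noncomputable def centralSub (ψ : nPlus V →ₗ⁅ℂ⁆ ℂ) (ξ : Fin 4 → ℂ) :
    Submodule (UEA V) (Mpsi V ψ) :=
  Submodule.span (UEA V)
    {m | ∃ i : Fin 4, ∃ y : Mpsi V ψ, m = (zElt V i - algebraMap ℂ (UEA V) (ξ i)) • y}

/-- The Whittaker module `L_{ψ,ξ} = M_ψ / Σᵢ (z_i − ξ_i·1) M_ψ`. -/
abbrev Lpsixi (ψ : nPlus V →ₗ⁅ℂ⁆ ℂ) (ξ : Fin 4 → ℂ) :=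
  Mpsi V ψ ⧸ centralSub V ψ ξ

noncomputable instance (ψ : nPlus V →ₗ⁅ℂ⁆ ℂ) (q : Submodule (UEA V) (Mpsi V ψ)) :
    LieRingModule V ((Mpsi V ψ) ⧸ q) :=
  letI : LieRingModule (UEA V) ((Mpsi V ψ) ⧸ q) := LieRingModule.ofAssociativeModule
  LieRingModule.compLieHom _ (ιV V)

noncomputable instance (ψ : nPlus V →ₗ⁅ℂ⁆ ℂ) (q : Submodule (UEA V) (Mpsi V ψ)) :
    LieModule ℂ V ((Mpsi V ψ) ⧸ q) :=
  letI : LieRingModule (UEA V) ((Mpsi V ψ) ⧸ q) := LieRingModule.ofAssociativeModule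
  letI : LieModule ℂ (UEA V) ((Mpsi V ψ) ⧸ q) := LieModule.ofAssociativeModule
  LieModule.compLieHom _ (ιV V)

/-- The image `w̄` of the cyclic Whittaker vector in `L_{ψ,ξ}`. -/
noncomputable def lw (ψ : nPlus V →ₗ⁅ℂ⁆ ℂ) (ξ : Fin 4 → ℂ) : Lpsixi V ψ ξ :=
  Submodule.Quotient.mk (mw V ψ)

/-- The size `|λ|` of a pseudopartition recorded as its multiplicity function. -/
def pdeg (f : ℕ →₀ ℕ) : ℕ := f.sum fun k m => k * m

/-- `L_{-λ} = L_{-λ_s} ⋯ L_{-λ_1} = ⋯ L_{-1}^{λ(1)} L_0^{λ(0)} ∈ U(𝒱)`,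
for a pseudopartition `λ` given by its multiplicity function. -/
noncomputable def Lword (lam : ℕ →₀ ℕ) : UEA V :=
  (((List.range (lam.support.sup id + 1)).reverse).map
    fun k : ℕ => (ιV V (L (-(k : ℤ)))) ^ (lam k)).prod

/-- `I_{-μ} = I_{-μ_r} ⋯ I_{-μ_1} = ⋯ I_{-2}^{μ(2)} I_{-1}^{μ(1)} ∈ U(𝒱)`. -/
noncomputable def Iword (mu : ℕ →₀ ℕ) : UEA V :=
  (((List.range (mu.support.sup id + 1)).reverse).map
    fun k : ℕ => (ιV V (I (-(k : ℤ)))) ^ (mu k)).prod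

/-- `z^t = z₀^{t₀} z₁^{t₁} z₂^{t₂} z₃^{t₃} ∈ U(𝒱)`. -/
noncomputable def zword (t : Fin 4 → ℕ) : UEA V :=
  ((List.finRange 4).map fun i => (zElt V i) ^ (t i)).prod

/-- Index type for the PBW-type basis of `M_ψ`: a 4-tuple `t`, a pseudopartition `λ`,
and a partition `μ` (a multiplicity function with `μ(0) = 0`). -/
abbrev WIdx : Type := (Fin 4 → ℕ) × (ℕ →₀ ℕ) × {g : ℕ →₀ ℕ // g 0 = 0}

/-- The property that `B` is the standard basis `{z^t L_{-λ} I_{-μ} w}` of `M_ψ`. -/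
def IsStdBasis (ψ : nPlus V →ₗ⁅ℂ⁆ ℂ) (B : Module.Basis WIdx ℂ (Mpsi V ψ)) : Prop :=
  ∀ (t : Fin 4 → ℕ) (lam : ℕ →₀ ℕ) (mu : {g : ℕ →₀ ℕ // g 0 = 0}),
    B (t, lam, mu) = (zword V t * Lword V lam * Iword V mu.1) • mw V ψ

/-- `maxdeg` of a vector of `M_ψ` with respect to the standard basis
(`⊥` plays the role of `-∞`). -/
noncomputable def maxdeg (ψ : nPlus V →ₗ⁅ℂ⁆ ℂ) (B : Module.Basis WIdx ℂ (Mpsi V ψ))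
    (v : Mpsi V ψ) : WithBot ℤ :=
  ((B.repr v).support.image fun p => ((pdeg p.2.1 : ℤ) + (pdeg p.2.2.1 : ℤ))).max

/-- `max_{L_0}` of a vector of `M_ψ`: the largest `λ(0)` over basis vectors occurring
with a nonzero coefficient. -/
noncomputable def maxL0 (ψ : nPlus V →ₗ⁅ℂ⁆ ℂ) (B : Module.Basis WIdx ℂ (Mpsi V ψ))
    (v : Mpsi V ψ) : WithBot ℤ :=
  ((B.repr v).support.image fun p => (p.2.1 0 : ℤ)).max

end THV

/-
Filter `M_ψ` by the spans `degLE ψ k` of the basis vectors `z^t L_{-λ} I_{-μ} w` of degree at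
most `k`. Commuting a letter past the leftmost letter of `L_{-λ} I_{-μ}` with the brackets of
`𝒱`, an induction on the word shows that `L_{-a}` (`a ≥ 0`) and `I_{-a}` (`a ≥ 1`) raise the
degree by at most `a`, that the central elements preserve it, and that `I_m` (`m ≥ 1`) lowers it
by at least `m - 1`. The defect `1` comes from `I_1 w = ψ(I_1) w`; for `m ≥ 2`, `I_m w = 0`
because `I_m` is a multiple of `[L_1, I_{m-1}]` and `ψ` kills brackets. Finally
`[I_m, u] w = I_m (u w) - ψ(I_m) u w`.
-/

namespace THV

lemma mem_support_add_single {g : ℕ →₀ ℕ} {a b k : ℕ}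
    (hk : k ∈ (g + Finsupp.single a b).support) : k ∈ g.support ∨ k = a :=
  (Finset.mem_union.mp (Finsupp.support_add hk)).imp_right
    fun hk => Finset.mem_singleton.mp (Finsupp.support_single_subset hk)

lemma induction_add_largest_part {motive : (ℕ →₀ ℕ) → Prop} (g : ℕ →₀ ℕ) (zero : motive 0)
    (add_part : ∀ a g, (∀ k ∈ g.support, k ≤ a) → motive g → motive (g + Finsupp.single a 1)) :
    motive g := by
  induction g using Finsupp.induction_on_max₂ with
  | zero => exact zero
  | add_single a b g hlt hb hg =>
    clear hb
    induction b with
    | zero => simpa using hg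
    | succ b ih =>
      rw [Finsupp.single_add, ← add_assoc]
      refine add_part a _ (fun k hk => ?_) ih
      rcases mem_support_add_single hk with hk | rfl
      exacts [(hlt k hk).le, le_rfl]

@[simp]
lemma pdeg_zero : pdeg 0 = 0 := Finsupp.sum_zero_index

lemma pdeg_add_single (g : ℕ →₀ ℕ) (a : ℕ) : pdeg (g + Finsupp.single a 1) = pdeg g + a := by
  rw [pdeg, Finsupp.sum_add_index' (fun _ => mul_zero _) (fun _ _ _ => mul_add _ _ _),
    Finsupp.sum_single_index (mul_zero _), mul_one, pdeg]

section Words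

variable {M : Type*} [Monoid M] (f : ℕ → M)

def descProd (g : ℕ →₀ ℕ) (n : ℕ) : M :=
  (((List.range n).reverse).map fun k => f k ^ g k).prod

-- `Lword V` and `Iword V` are, by definition, `word` of the letters `ι L_{-k}` and `ι I_{-k}`.
def word (g : ℕ →₀ ℕ) : M := descProd f g (g.support.sup id + 1)

lemma descProd_succ (g : ℕ →₀ ℕ) (n : ℕ) :
    descProd f g (n + 1) = f n ^ g n * descProd f g n := by
  simp [descProd, List.range_succ]

lemma descProd_congr {g g' : ℕ →₀ ℕ} {n : ℕ} (h : ∀ k < n, g k = g' k) :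
    descProd f g n = descProd f g' n := by
  induction n with
  | zero => rfl
  | succ n ih =>
    rw [descProd_succ, descProd_succ, h n n.lt_succ_self, ih fun k hk => h k (by omega)]

lemma word_eq_descProd {g : ℕ →₀ ℕ} {n : ℕ} (h : g.support.sup id < n) :
    word f g = descProd f g n := by
  induction n, h using Nat.le_induction with
  | base => rfl
  | succ n hn ih =>
    have hgn : g n = 0 := Finsupp.notMem_support_iff.mp fun hm =>
      absurd (Finset.le_sup (f := id) hm) (by simp only [id]; omega)
    rw [descProd_succ, ← ih, hgn, pow_zero, one_mul]

lemma descProd_add_single {g : ℕ →₀ ℕ} {a n : ℕ} (ha : a < n)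
    (hcomm : ∀ k ∈ g.support, a < k → Commute (f a) (f k)) :
    descProd f (g + Finsupp.single a 1) n = f a * descProd f g n := by
  induction n with
  | zero => omega
  | succ n ih =>
    rw [descProd_succ, descProd_succ, Finsupp.add_apply]
    rcases (Nat.lt_succ_iff.mp ha).lt_or_eq with ha | rfl
    · rw [Finsupp.single_eq_of_ne (by omega), add_zero, ih ha]
      by_cases hn : g n = 0
      · simp [hn]
      · exact ((hcomm n (Finsupp.mem_support_iff.mpr hn) ha).pow_right _).symm.left_comm _
    · rw [Finsupp.single_eq_same, pow_succ', mul_assoc,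
        descProd_congr (g' := g) f fun k hk => by simp [Finsupp.single_eq_of_ne hk.ne]]

lemma word_add_single {g : ℕ →₀ ℕ} {a : ℕ}
    (hcomm : ∀ k ∈ g.support, a < k → Commute (f a) (f k)) :
    word f (g + Finsupp.single a 1) = f a * word f g := by
  have hg : g.support.sup id ≤ g.support.sup id ⊔ a := le_sup_left
  have hg' : (g + Finsupp.single a 1).support.sup id ≤ g.support.sup id ⊔ a := by
    refine Finset.sup_le fun k hk => ?_
    rcases mem_support_add_single hk with hk | rfl
    exacts [le_sup_of_le_left (Finset.le_sup (f := id) hk), le_sup_right]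
  rw [word_eq_descProd f (Nat.lt_succ_of_le hg), word_eq_descProd f (Nat.lt_succ_of_le hg'),
    descProd_add_single f (Nat.lt_succ_of_le le_sup_right) hcomm]

end Words

section Brackets

variable {V : Type} [LieRing V] [LieAlgebra ℂ V]

lemma iota_mul_iota (x y : V) : ιV V x * ιV V y = ιV V y * ιV V x + ιV V ⁅x, y⁆ := by
  rw [LieHom.map_lie, Ring.lie_def]
  abel

lemma commute_iota_of_lie_eq_zero {x y : V} (h : ⁅x, y⁆ = 0) : Commute (ιV V x) (ιV V y) := by
  simpa [Commute, SemiconjBy, h] using iota_mul_iota x y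

variable [THV V]

lemma lie_I_zero (y : V) : ⁅(I 0 : V), y⁆ = 0 := by
  suffices LieAlgebra.ad ℂ V (I 0) = 0 by simpa using LinearMap.congr_fun this y
  refine basis.ext fun b => ?_
  rcases b with k | k | i
  · rw [basis_L, LieAlgebra.ad_apply, ← lie_skew, lie_LI]
    split_ifs with h <;> simp_all
  · simp [basis_I, lie_II]
  · rw [basis_z, LieAlgebra.ad_apply, ← lie_skew, lie_z, neg_zero, LinearMap.zero_apply]

lemma commute_zElt_iota (i : Fin 4) (y : V) : Commute (zElt V i) (ιV V y) := by
  fin_cases i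
  · exact commute_iota_of_lie_eq_zero (lie_I_zero y)
  all_goals exact commute_iota_of_lie_eq_zero (lie_z _ y)

lemma commute_iota_zword (y : V) (t : Fin 4 → ℕ) : Commute (ιV V y) (zword V t) :=
  Commute.list_prod_right _ _ fun _ hx => by
    obtain ⟨i, -, rfl⟩ := List.mem_map.mp hx
    exact ((commute_zElt_iota i y).symm).pow_right _

lemma zword_eq (t : Fin 4 → ℕ) :
    zword V t = zElt V 0 ^ t 0 * (zElt V 1 ^ t 1 * (zElt V 2 ^ t 2 * zElt V 3 ^ t 3)) := by
  simp [zword, List.finRange_succ]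

lemma zword_zero : zword V 0 = 1 := by simp [zword_eq]

lemma zElt_mul_zword (i : Fin 4) (t : Fin 4 → ℕ) :
    zElt V i * zword V t = zword V (t + Pi.single i 1) := by
  have h j n : Commute (zElt V i) (zElt V j ^ n) := by
    fin_cases j <;> exact (commute_zElt_iota i _).pow_right n
  obtain rfl | rfl | rfl | rfl : i = 0 ∨ i = 1 ∨ i = 2 ∨ i = 3 := by omega
  all_goals simp [zword_eq, pow_succ', mul_assoc]
  all_goals simp only [(h 0 (t 0)).left_comm, (h 1 (t 1)).left_comm, (h 2 (t 2)).left_comm]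

lemma Lword_zero : Lword V 0 = 1 := by simp [Lword]

lemma Iword_zero : Iword V 0 = 1 := by simp [Iword]

lemma Lword_add_single {lam : ℕ →₀ ℕ} {a : ℕ} (h : ∀ k ∈ lam.support, k ≤ a) :
    Lword V (lam + Finsupp.single a 1) = ιV V (L (-(a : ℤ))) * Lword V lam :=
  word_add_single _ fun k hk hak => absurd (h k hk) (by omega)

lemma Iword_add_single (mu : ℕ →₀ ℕ) (a : ℕ) :
    Iword V (mu + Finsupp.single a 1) = ιV V (I (-(a : ℤ))) * Iword V mu :=
  word_add_single _ fun k _ _ => commute_iota_of_lie_eq_zero <| by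
    rw [lie_II]
    split_ifs <;> simp_all

lemma iota_L_neg_mul_iota_L_neg {a N : ℕ} (h : a + N ≠ 0) :
    ιV V (L (-(a : ℤ))) * ιV V (L (-(N : ℤ))) = ιV V (L (-(N : ℤ))) * ιV V (L (-(a : ℤ))) +
      ((a : ℂ) - N) • ιV V (L (-((a + N : ℕ) : ℤ))) := by
  rw [iota_mul_iota, lie_LL, if_neg (by omega), zero_smul, add_zero, map_smul]
  push_cast
  ring_nf

lemma iota_I_mul_iota_L_neg (j : ℤ) (N : ℕ) :
    ιV V (I j) * ιV V (L (-(N : ℤ))) = ιV V (L (-(N : ℤ))) * ιV V (I j) -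
      (j : ℂ) • ιV V (I (j - N)) - (if j = N then (N : ℂ) ^ 2 + N else 0) • ιV V (z 1) := by
  rw [iota_mul_iota, ← lie_skew, lie_LI]
  by_cases h : j = N
  · simp [h]
    abel
  · simp [h, sub_eq_neg_add]
    abel

lemma iota_I_mul_iota_I_neg (j : ℤ) (N : ℕ) :
    ιV V (I j) * ιV V (I (-(N : ℤ))) = ιV V (I (-(N : ℤ))) * ιV V (I j) +
      (if j = N then (j : ℂ) else 0) • ιV V (z 2) := by
  rw [iota_mul_iota, lie_II]
  by_cases h : j = N <;> simp [h, eq_comm]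

end Brackets

section Whittaker

variable {V : Type} [LieRing V] [LieAlgebra ℂ V] [THV V] {ψ : nPlus V →ₗ⁅ℂ⁆ ℂ}

lemma iota_smul_mw (x : nPlus V) : ιV V (x : V) • mw V ψ = ψ x • mw V ψ := by
  rw [mw, ← Submodule.Quotient.mk_smul, ← algebraMap_smul (UEA V) (ψ x),
    ← Submodule.Quotient.mk_smul, Submodule.Quotient.eq]
  exact Submodule.subset_span ⟨x, by simp [smul_eq_mul]⟩

lemma psi_I_eq_zero {m : ℤ} (hm : 2 ≤ m) : ψ ⟨I m, I_mem_nPlus V (by omega)⟩ = 0 := by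
  have hbr : ⁅(⟨L 1, L_mem_nPlus V le_rfl⟩ : nPlus V), ⟨I (m - 1), I_mem_nPlus V (by omega)⟩⁆ =
      ((m : ℂ) - 1) • (⟨I m, I_mem_nPlus V (by omega)⟩ : nPlus V) := by
    ext
    simp [lie_LI, show m - 1 ≠ -1 by omega]
  have := congrArg ψ hbr
  rw [LieHom.map_lie, Ring.lie_def, mul_comm, sub_self, map_smul, smul_eq_mul] at this
  exact (mul_eq_zero.mp this.symm).resolve_left
    (sub_ne_zero.mpr (by exact_mod_cast (by omega : m ≠ 1)))

variable (ψ) in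
noncomputable def pbwVec (t : Fin 4 → ℕ) (lam mu : ℕ →₀ ℕ) : Mpsi V ψ :=
  (zword V t * Lword V lam * Iword V mu) • mw V ψ

variable (ψ) in
noncomputable def degLE (k : ℤ) : Submodule ℂ (Mpsi V ψ) :=
  Submodule.span ℂ
    {v | ∃ t lam mu, mu 0 = 0 ∧ (pdeg lam : ℤ) + pdeg mu ≤ k ∧ pbwVec ψ t lam mu = v}

lemma degLE_mono {k l : ℤ} (h : k ≤ l) : degLE ψ k ≤ degLE ψ l :=
  Submodule.span_mono fun _ ⟨t, lam, mu, h0, hk, hv⟩ => ⟨t, lam, mu, h0, hk.trans h, hv⟩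

lemma pbwVec_mem_degLE {t : Fin 4 → ℕ} {lam mu : ℕ →₀ ℕ} {k : ℤ} (h0 : mu 0 = 0)
    (hk : (pdeg lam : ℤ) + pdeg mu ≤ k) : pbwVec ψ t lam mu ∈ degLE ψ k :=
  Submodule.subset_span ⟨t, lam, mu, h0, hk, rfl⟩

lemma smul_mem_degLE {u : UEA V} {c k : ℤ}
    (hu : ∀ t lam mu, mu 0 = 0 → (pdeg lam : ℤ) + pdeg mu ≤ k →
      u • pbwVec ψ t lam mu ∈ degLE ψ (pdeg lam + pdeg mu + c))
    {v : Mpsi V ψ} (hv : v ∈ degLE ψ k) : u • v ∈ degLE ψ (k + c) := by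
  induction hv using Submodule.span_induction with
  | mem _ hx =>
    obtain ⟨t, lam, mu, h0, hk, rfl⟩ := hx
    exact degLE_mono (by omega) (hu t lam mu h0 hk)
  | zero => simp
  | add _ _ _ _ hx hy => simpa using add_mem hx hy
  | smul c _ _ hx => simpa [smul_comm u c] using Submodule.smul_mem _ c hx

lemma iota_L_neg_smul_pbwVec (t : Fin 4 → ℕ) {lam : ℕ →₀ ℕ} (mu : ℕ →₀ ℕ) {a : ℕ}
    (h : ∀ k ∈ lam.support, k ≤ a) :
    ιV V (L (-(a : ℤ))) • pbwVec ψ t lam mu = pbwVec ψ t (lam + Finsupp.single a 1) mu := by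
  rw [pbwVec, pbwVec, smul_smul, Lword_add_single h, ← mul_assoc, ← mul_assoc,
    (commute_iota_zword _ t).eq, mul_assoc (zword V t)]

lemma iota_I_neg_smul_pbwVec_zero (t : Fin 4 → ℕ) (mu : ℕ →₀ ℕ) (a : ℕ) :
    ιV V (I (-(a : ℤ))) • pbwVec ψ t 0 mu = pbwVec ψ t 0 (mu + Finsupp.single a 1) := by
  rw [pbwVec, pbwVec, Lword_zero, mul_one, smul_smul, Iword_add_single, ← mul_assoc,
    ← mul_assoc, (commute_iota_zword _ t).eq]

lemma iota_smul_pbwVec_zero_zero (t : Fin 4 → ℕ) (x : nPlus V) :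
    ιV V (x : V) • pbwVec ψ t 0 0 = ψ x • pbwVec ψ t 0 0 := by
  rw [pbwVec, Lword_zero, Iword_zero, mul_one, mul_one, smul_smul, (commute_iota_zword _ t).eq,
    mul_smul, iota_smul_mw, smul_comm]

lemma zElt_smul_pbwVec_mem {t : Fin 4 → ℕ} {lam mu : ℕ →₀ ℕ} {k : ℤ} (i : Fin 4)
    (h0 : mu 0 = 0) (hk : (pdeg lam : ℤ) + pdeg mu ≤ k) :
    zElt V i • pbwVec ψ t lam mu ∈ degLE ψ k := by
  rw [pbwVec, smul_smul, ← mul_assoc, ← mul_assoc, zElt_mul_zword]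
  exact pbwVec_mem_degLE h0 hk

lemma psi_I_smul_mem_degLE {m k : ℤ} (hm : 1 ≤ m) {v : Mpsi V ψ} (hv : v ∈ degLE ψ k) :
    ψ ⟨I m, I_mem_nPlus V hm⟩ • v ∈ degLE ψ (k - m + 1) := by
  rcases hm.eq_or_lt with rfl | hm
  · exact Submodule.smul_mem _ _ (by simpa using hv)
  · rw [psi_I_eq_zero hm, zero_smul]
    exact zero_mem _

lemma iota_L_neg_smul_pbwVec_mem_of_lt (n : ℕ) (a : ℕ) (t : Fin 4 → ℕ) (lam mu : ℕ →₀ ℕ)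
    (h0 : mu 0 = 0) (hn : pdeg lam + pdeg mu < n) :
    ιV V (L (-(a : ℤ))) • pbwVec ψ t lam mu ∈ degLE ψ (pdeg lam + pdeg mu + a) := by
  induction n generalizing a t lam mu with
  | zero => omega
  | succ n ihn =>
    induction lam using induction_add_largest_part generalizing a with
    | zero =>
      rw [iota_L_neg_smul_pbwVec t mu (by simp)]
      exact pbwVec_mem_degLE h0 (by rw [pdeg_add_single]; push_cast; omega)
    | add_part N lam hN ih =>
      rw [pdeg_add_single] at hn ⊢
      by_cases haN : N ≤ a
      · rw [iota_L_neg_smul_pbwVec t mu fun k hk => ?_]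
        · exact pbwVec_mem_degLE h0 (by simp only [pdeg_add_single]; push_cast; omega)
        · rcases mem_support_add_single hk with hk | rfl
          exacts [(hN k hk).trans haN, haN]
      rw [← iota_L_neg_smul_pbwVec t mu hN, smul_smul, iota_L_neg_mul_iota_L_neg (by omega),
        add_smul, mul_smul, smul_assoc]
      refine add_mem ?_ (Submodule.smul_mem _ _ ?_)
      · -- `a < N`, so `L_{-a}` applied to the shorter vector stays in degree `< n`
        have := smul_mem_degLE (c := N) (fun t' lam' mu' h0' hk =>
          ihn N t' lam' mu' h0' (by omega)) (ih a (by omega))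
        exact degLE_mono (by push_cast; omega) this
      · exact degLE_mono (by push_cast; omega) (ih (a + N) (by omega))

lemma iota_L_neg_smul_mem_degLE (a : ℕ) {k : ℤ} {v : Mpsi V ψ} (hv : v ∈ degLE ψ k) :
    ιV V (L (-(a : ℤ))) • v ∈ degLE ψ (k + a) :=
  smul_mem_degLE (fun t lam mu h0 _ =>
    iota_L_neg_smul_pbwVec_mem_of_lt _ a t lam mu h0 (Nat.lt_succ_self _)) hv

lemma iota_I_neg_smul_pbwVec_mem {a : ℕ} (ha : a ≠ 0) (t : Fin 4 → ℕ) (lam : ℕ →₀ ℕ)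
    {mu : ℕ →₀ ℕ} (h0 : mu 0 = 0) :
    ιV V (I (-(a : ℤ))) • pbwVec ψ t lam mu ∈ degLE ψ (pdeg lam + pdeg mu + a) := by
  induction lam using induction_add_largest_part generalizing a with
  | zero =>
    rw [iota_I_neg_smul_pbwVec_zero]
    refine pbwVec_mem_degLE (by simp [h0, Ne.symm ha]) ?_
    rw [pdeg_add_single]
    push_cast
    omega
  | add_part N lam hN ih =>
    have hidx : -(a : ℤ) - N = -((a + N : ℕ) : ℤ) := by push_cast; ring
    rw [← iota_L_neg_smul_pbwVec t mu hN, smul_smul, iota_I_mul_iota_L_neg, if_neg (by omega),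
      zero_smul, sub_zero, hidx, sub_smul, mul_smul, smul_assoc, pdeg_add_single]
    refine sub_mem ?_ (Submodule.smul_mem _ _ ?_)
    · exact degLE_mono (by push_cast; omega) (iota_L_neg_smul_mem_degLE N (ih ha))
    · exact degLE_mono (by push_cast; omega) (ih (a := a + N) (by omega))

lemma iota_I_smul_mem_degLE_of_nonpos {j k : ℤ} (hj : j ≤ 0) {v : Mpsi V ψ}
    (hv : v ∈ degLE ψ k) : ιV V (I j) • v ∈ degLE ψ (k - j) := by
  rw [sub_eq_add_neg]
  refine smul_mem_degLE (fun t lam mu h0 _ => ?_) hv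
  rcases hj.lt_or_eq with hj | rfl
  · obtain ⟨a, rfl⟩ : ∃ a : ℕ, j = -(a : ℤ) := ⟨j.natAbs, by omega⟩
    simpa using iota_I_neg_smul_pbwVec_mem (by omega) t lam h0
  · exact zElt_smul_pbwVec_mem 0 h0 (by omega)

lemma iota_I_smul_pbwVec_zero_mem_of_pos {m : ℤ} (hm : 1 ≤ m) (t : Fin 4 → ℕ) {mu : ℕ →₀ ℕ}
    (h0 : mu 0 = 0) : ιV V (I m) • pbwVec ψ t 0 mu ∈ degLE ψ (pdeg mu - m + 1) := by
  induction mu using induction_add_largest_part with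
  | zero =>
    rw [iota_smul_pbwVec_zero_zero t ⟨I m, I_mem_nPlus V hm⟩]
    exact psi_I_smul_mem_degLE hm (pbwVec_mem_degLE rfl (by simp))
  | add_part N mu hN ih =>
    have hN0 : N ≠ 0 := by
      rintro rfl
      simp at h0
    have h0' : mu 0 = 0 := by simpa [Finsupp.single_apply, Ne.symm hN0] using h0
    rw [← iota_I_neg_smul_pbwVec_zero, smul_smul, iota_I_mul_iota_I_neg, add_smul, mul_smul,
      smul_assoc, pdeg_add_single]
    refine add_mem ?_ ?_
    · exact degLE_mono (by push_cast; omega)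
        (iota_I_smul_mem_degLE_of_nonpos (by omega : -(N : ℤ) ≤ 0) (ih h0'))
    · split_ifs with hmN
      · exact Submodule.smul_mem _ _ (zElt_smul_pbwVec_mem 3 h0' (by simp; omega))
      · simp

lemma iota_I_smul_pbwVec_mem_of_pos {m : ℤ} (hm : 1 ≤ m) (t : Fin 4 → ℕ) (lam : ℕ →₀ ℕ)
    {mu : ℕ →₀ ℕ} (h0 : mu 0 = 0) :
    ιV V (I m) • pbwVec ψ t lam mu ∈ degLE ψ (pdeg lam + pdeg mu - m + 1) := by
  induction lam using induction_add_largest_part generalizing m with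
  | zero => simpa using iota_I_smul_pbwVec_zero_mem_of_pos hm t h0
  | add_part N lam hN ih =>
    rw [← iota_L_neg_smul_pbwVec t mu hN, smul_smul, iota_I_mul_iota_L_neg, sub_smul, sub_smul,
      mul_smul, smul_assoc, smul_assoc, pdeg_add_single]
    refine sub_mem (sub_mem ?_ (Submodule.smul_mem _ _ ?_)) ?_
    · exact degLE_mono (by push_cast; omega) (iota_L_neg_smul_mem_degLE N (ih hm))
    · -- `I_{m-N}` is a lowering or central letter when `m ≤ N`, and a raising one otherwise
      rcases le_or_gt m N with hmN | hmN
      · exact degLE_mono (by push_cast; omega)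
          (iota_I_smul_mem_degLE_of_nonpos (by omega : m - N ≤ 0)
            (pbwVec_mem_degLE (t := t) (lam := lam) h0 le_rfl))
      · exact degLE_mono (by push_cast; omega) (ih (m := m - N) (by omega))
    · split_ifs with hmN
      · exact Submodule.smul_mem _ _ (zElt_smul_pbwVec_mem 2 h0 (by push_cast; omega))
      · simp

lemma maxdeg_le_of_mem_degLE {B : Module.Basis WIdx ℂ (Mpsi V ψ)} (hB : IsStdBasis V ψ B)
    {k : ℤ} {v : Mpsi V ψ} (hv : v ∈ degLE ψ k) : maxdeg V ψ B v ≤ k := by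
  have hspan : degLE ψ k ≤ Submodule.span ℂ (B '' {p | (pdeg p.2.1 : ℤ) + pdeg p.2.2.1 ≤ k}) :=
    Submodule.span_le.mpr fun _ ⟨t, lam, mu, h0, hk, hv⟩ =>
      Submodule.subset_span ⟨(t, lam, ⟨mu, h0⟩), hk, by rw [hB, ← hv, pbwVec]⟩
  have hsupp := (Module.Basis.mem_span_image B).mp (hspan hv)
  refine Finset.max_le fun d hd => ?_
  obtain ⟨p, hp, rfl⟩ := Finset.mem_image.mp hd
  exact WithBot.coe_le_coe.mpr (hsupp hp)

end Whittaker

end THV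

open THV in
theorem maxdeg_bracket_I_le_general
    (V : Type) [LieRing V] [LieAlgebra ℂ V] [THV V]
    (ψ : nPlus V →ₗ⁅ℂ⁆ ℂ)
    (B : Module.Basis WIdx ℂ (Mpsi V ψ)) (hB : IsStdBasis V ψ B)
    (m : ℤ) (hm : 1 ≤ m) (lam : ℕ →₀ ℕ) (mu : ℕ →₀ ℕ) (hmu : mu 0 = 0) :
    maxdeg V ψ B (⁅ιV V (THV.I m), Lword V lam * Iword V mu⁆ • mw V ψ)
      ≤ (((pdeg lam : ℤ) + (pdeg mu : ℤ) - m + 1 : ℤ) : WithBot ℤ) := by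
  have hv : (Lword V lam * Iword V mu) • mw V ψ = pbwVec ψ 0 lam mu := by
    rw [pbwVec, zword_zero, one_mul]
  apply maxdeg_le_of_mem_degLE hB
  rw [Ring.lie_def, sub_smul, mul_smul, mul_smul (Lword V lam * Iword V mu), hv,
    iota_smul_mw (⟨I m, I_mem_nPlus V hm⟩ : nPlus V), smul_comm, hv]
  exact sub_mem (iota_I_smul_pbwVec_mem_of_pos hm 0 lam hmu)
    (psi_I_smul_mem_degLE hm (pbwVec_mem_degLE hmu le_rfl))

open THV in
/-- `maxdeg([I_m, L_{−λ}I_{−μ}]w) ≤ |λ| + |μ| − m + 1`. -/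
theorem maxdeg_bracket_I_le
    (V : Type) [LieRing V] [LieAlgebra ℂ V] [THV V]
    (ψ : nPlus V →ₗ⁅ℂ⁆ ℂ)
    (hL1 : ψ ⟨THV.L 1, L_mem_nPlus V le_rfl⟩ ≠ 0)
    (hL2 : ψ ⟨THV.L 2, L_mem_nPlus V one_le_two⟩ ≠ 0)
    (hI1 : ψ ⟨THV.I 1, I_mem_nPlus V le_rfl⟩ ≠ 0)
    (B : Module.Basis WIdx ℂ (Mpsi V ψ)) (hB : IsStdBasis V ψ B)
    (m : ℤ) (hm : 1 ≤ m) (lam : ℕ →₀ ℕ) (mu : ℕ →₀ ℕ) (hmu : mu 0 = 0) :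
    maxdeg V ψ B (⁅ιV V (THV.I m), Lword V lam * Iword V mu⁆ • mw V ψ)
      ≤ (((pdeg lam : ℤ) + (pdeg mu : ℤ) - m + 1 : ℤ) : WithBot ℤ) :=
  maxdeg_bracket_I_le_general V ψ B hB m hm lam mu hmu
end

section
/- Let ψ : 𝔫⁺ → ℂ be a Lie algebra homomorphism with ψ(L_1) ≠ 0, ψ(L_2) ≠ 0, ψ(I_1) ≠ 0, and let V be a Whittaker module of type ψ for 𝒱. Then for every integer n > 0, the operators v ↦ L_n v − ψ(L_n)v and v ↦ I_n v − ψ(I_n)v on V are locally nilpotent: for every v ∈ V there exists N ∈ ℕ such that (L_n − ψ(L_n))^N v = 0 and (I_n − ψ(I_n))^N v = 0. -/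
/-!
Common setup: the twisted Heisenberg–Virasoro algebra `𝒱`, its subalgebra `𝔫⁺`,
the universal Whittaker module `M_ψ`, the quotients `L_{ψ,ξ}`, and the notions of
Whittaker vectors/modules, degrees, etc.
-/

open UniversalEnvelopingAlgebra

attribute [local instance 100] LieRing.ofAssociativeRing

/-!
Call a subspace `M` of `W` good if it is stable under the modes `L k, I k` (`k ≥ 1`) and lies in
the generalized `ψ`-eigenspace of each of them. Good subspaces are closed under arbitrary sums, so
there is a largest one, and it is a `𝒱`-submodule: if `x` has degree `≥ d`, then `M + x·M` is
good, because `T⁅x, m⁆ = ⁅[y, x], m⁆ + ⁅x, T m⁆` for `T = y − ψ(y)`, while `(ad y)ⁱ x` has degree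
`≥ 1` once `i ≥ 1 − d`, and elements of degree `≥ 1` (positive modes and central elements) bracket
`M` into the eigenspace. As `ℂ w` is good, the largest good subspace contains the generator `w`,
hence is all of `W`.
-/

open LieModule LieAlgebra

section Generic

variable {R L W : Type*} [CommRing R] [LieRing L] [LieAlgebra R L]
  [AddCommGroup W] [Module R W] [LieRingModule L W]

theorem Module.End.mem_maxGenEigenspace_of_sub_smul_apply_mem {f : Module.End R W} {c : R}
    {m : W} (h : (f - c • 1) m ∈ f.maxGenEigenspace c) : m ∈ f.maxGenEigenspace c := by
  obtain ⟨k, hk⟩ := (Module.End.mem_maxGenEigenspace _ _ _).1 h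
  exact (Module.End.mem_maxGenEigenspace _ _ _).2
    ⟨k + 1, by rw [pow_succ, Module.End.mul_apply, hk]⟩

def bracketSup (P : Submodule R L) (M : Submodule R W) : Submodule R W :=
  M ⊔ Submodule.span R (Set.image2 (fun x m => ⁅x, m⁆) (P : Set L) (M : Set W))

theorem le_bracketSup (P : Submodule R L) (M : Submodule R W) : M ≤ bracketSup P M :=
  le_sup_left

theorem lie_mem_bracketSup {P : Submodule R L} {M : Submodule R W} {x : L} {m : W}
    (hx : x ∈ P) (hm : m ∈ M) : ⁅x, m⁆ ∈ bracketSup P M :=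
  le_sup_right (α := Submodule R W) (Submodule.subset_span (Set.mem_image2_of_mem hx hm))

theorem bracketSup_le {P : Submodule R L} {M K : Submodule R W} (hM : M ≤ K)
    (hPM : ∀ x ∈ P, ∀ m ∈ M, ⁅x, m⁆ ∈ K) : bracketSup P M ≤ K :=
  sup_le hM (Submodule.span_le.2 (Set.image2_subset_iff.2 hPM))

variable [LieModule R L W]

namespace LieModule

theorem toEnd_sub_smul_lie (y x : L) (c : R) (m : W) :
    (toEnd R L W y - c • 1) ⁅x, m⁆ = ⁅ad R L y x, m⁆ + ⁅x, (toEnd R L W y - c • 1) m⁆ := by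
  simp only [LinearMap.sub_apply, LinearMap.smul_apply, Module.End.one_apply, toEnd_lie,
    lie_sub, lie_smul]
  abel

theorem lie_mem_maxGenEigenspace_of_ad_pow {y x : L} {c : R} {N : Submodule R W}
    (hN : ∀ n ∈ N, ⁅y, n⁆ ∈ N) {r : ℕ}
    (hx : ∀ i ≥ r, ∀ n ∈ N, ⁅(ad R L y ^ i) x, n⁆ ∈ (toEnd R L W y).maxGenEigenspace c)
    {m : W} (hmN : m ∈ N) (hm : m ∈ (toEnd R L W y).maxGenEigenspace c) :
    ⁅x, m⁆ ∈ (toEnd R L W y).maxGenEigenspace c := by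
  obtain ⟨k, hk⟩ := (Module.End.mem_maxGenEigenspace _ _ _).1 hm
  clear hm
  induction k generalizing m r x with
  | zero => simp_all
  | succ k ihk =>
    induction r generalizing x with
    | zero => simpa using hx 0 le_rfl m hmN
    | succ r ihr =>
      refine Module.End.mem_maxGenEigenspace_of_sub_smul_apply_mem ?_
      rw [toEnd_sub_smul_lie]
      refine add_mem (ihr fun i hi n hn => ?_) (ihk hx ?_ ?_)
      · rw [← Module.End.mul_apply, ← pow_succ]
        exact hx (i + 1) (by omega) n hn
      · exact sub_mem (hN m hmN) (N.smul_mem c hmN)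
      · rwa [← Module.End.mul_apply, ← pow_succ]

end LieModule

theorem lie_mem_bracketSup_of_mem {y : L} {P : Submodule R L} {M : Submodule R W}
    (hP : ∀ x ∈ P, ⁅y, x⁆ ∈ P) (hM : ∀ m ∈ M, ⁅y, m⁆ ∈ M) {w : W}
    (hw : w ∈ bracketSup P M) : ⁅y, w⁆ ∈ bracketSup P M := by
  refine bracketSup_le (K := (bracketSup P M).comap (toEnd R L W y))
    (fun m hm => le_bracketSup P M (hM m hm)) (fun x hx m hm => ?_) hw
  show ⁅y, ⁅x, m⁆⁆ ∈ bracketSup P M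
  rw [leibniz_lie]
  exact add_mem (lie_mem_bracketSup (hP x hx) hm) (lie_mem_bracketSup hx (hM m hm))

end Generic

namespace THV

variable {V : Type} [LieRing V] [LieAlgebra ℂ V] [THV V]

theorem lie_z_right (x : V) (i : Fin 3) : ⁅x, (z i : V)⁆ = 0 := by
  rw [← lie_skew, lie_z, neg_zero]

variable (V) in
def modesFrom (d : ℤ) : Set V := {x | ∃ e : ℤ, d ≤ e ∧ (x = L e ∨ x = I e)}

variable (V) in
def degGe (d : ℤ) : Submodule ℂ V :=
  Submodule.span ℂ (modesFrom V d ∪ Set.range z)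

theorem L_mem_degGe {d e : ℤ} (h : d ≤ e) : (L e : V) ∈ degGe V d :=
  Submodule.subset_span (Or.inl ⟨e, h, Or.inl rfl⟩)

theorem I_mem_degGe {d e : ℤ} (h : d ≤ e) : (I e : V) ∈ degGe V d :=
  Submodule.subset_span (Or.inl ⟨e, h, Or.inr rfl⟩)

theorem z_mem_degGe (d : ℤ) (i : Fin 3) : (z i : V) ∈ degGe V d :=
  Submodule.subset_span (Or.inr ⟨i, rfl⟩)

theorem degGe_antitone : Antitone (degGe V) := fun _ _ h =>
  Submodule.span_mono (Set.union_subset_union_left _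
    fun _ ⟨e, he, hx⟩ => ⟨e, h.trans he, hx⟩)

theorem exists_mem_degGe (x : V) : ∃ d, x ∈ degGe V d := by
  have hx : x ∈ Submodule.span ℂ (Set.range (basis : Module.Basis _ ℂ V)) := by
    rw [Module.Basis.span_eq]; exact Submodule.mem_top
  induction hx using Submodule.span_induction with
  | mem x hx =>
    obtain ⟨k | k | i, rfl⟩ := hx
    · exact ⟨k, by rw [basis_L]; exact L_mem_degGe le_rfl⟩
    · exact ⟨k, by rw [basis_I]; exact I_mem_degGe le_rfl⟩
    · exact ⟨0, by rw [basis_z]; exact z_mem_degGe 0 i⟩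
  | zero => exact ⟨0, zero_mem _⟩
  | add x y _ _ hx hy =>
    obtain ⟨d, hd⟩ := hx
    obtain ⟨d', hd'⟩ := hy
    exact ⟨min d d', add_mem (degGe_antitone (min_le_left d d') hd)
      (degGe_antitone (min_le_right d d') hd')⟩
  | smul c x _ hx =>
    obtain ⟨d, hd⟩ := hx
    exact ⟨d, Submodule.smul_mem _ c hd⟩

theorem lie_mem_degGe_add {y : V} {k : ℤ}
    (hy : ∀ e, ⁅y, (L e : V)⁆ ∈ degGe V (e + k) ∧ ⁅y, (I e : V)⁆ ∈ degGe V (e + k))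
    {d : ℤ} {x : V} (hx : x ∈ degGe V d) : ⁅y, x⁆ ∈ degGe V (d + k) := by
  induction hx using Submodule.span_induction with
  | mem x hx =>
    obtain ⟨e, hde, rfl | rfl⟩ | ⟨i, rfl⟩ := hx
    · exact degGe_antitone (by omega) (hy e).1
    · exact degGe_antitone (by omega) (hy e).2
    · rw [lie_z_right]; exact zero_mem _
  | zero => rw [lie_zero]; exact zero_mem _
  | add a b _ _ ha hb => rw [lie_add]; exact add_mem ha hb
  | smul c a _ ha => rw [lie_smul]; exact Submodule.smul_mem _ c ha

theorem lie_L_mem_degGe (k e : ℤ) :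
    ⁅(L k : V), L e⁆ ∈ degGe V (e + k) ∧ ⁅(L k : V), I e⁆ ∈ degGe V (e + k) := by
  rw [lie_LL, lie_LI, add_comm k e]
  exact ⟨add_mem (Submodule.smul_mem _ _ (L_mem_degGe le_rfl))
      (Submodule.smul_mem _ _ (z_mem_degGe _ 0)),
    add_mem (Submodule.smul_mem _ _ (I_mem_degGe le_rfl))
      (Submodule.smul_mem _ _ (z_mem_degGe _ 1))⟩

theorem lie_I_mem_degGe (k e : ℤ) :
    ⁅(I k : V), L e⁆ ∈ degGe V (e + k) ∧ ⁅(I k : V), I e⁆ ∈ degGe V (e + k) := by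
  rw [← lie_skew, lie_LI, lie_II]
  exact ⟨neg_mem (add_mem (Submodule.smul_mem _ _ (I_mem_degGe le_rfl))
      (Submodule.smul_mem _ _ (z_mem_degGe _ 1))),
    Submodule.smul_mem _ _ (z_mem_degGe _ 2)⟩

theorem lie_mem_degGe_add_one {y : V} (hy : y ∈ modesFrom V 1) {d : ℤ} {x : V}
    (hx : x ∈ degGe V d) : ⁅y, x⁆ ∈ degGe V (d + 1) := by
  obtain ⟨k, hk, rfl | rfl⟩ := hy
  · exact degGe_antitone (by omega) (lie_mem_degGe_add (lie_L_mem_degGe k) hx)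
  · exact degGe_antitone (by omega) (lie_mem_degGe_add (lie_I_mem_degGe k) hx)

theorem ad_pow_mem_degGe {y : V} (hy : y ∈ modesFrom V 1) {d : ℤ} {x : V}
    (hx : x ∈ degGe V d) (i : ℕ) : (ad ℂ V y ^ i) x ∈ degGe V (d + i) := by
  induction i with
  | zero => simpa using hx
  | succ i ih =>
    rw [pow_succ', Module.End.mul_apply, ad_apply, Nat.cast_succ, ← add_assoc]
    exact lie_mem_degGe_add_one hy ih

section Module

variable {W : Type} [AddCommGroup W] [Module ℂ W] [LieRingModule V W] [LieModule ℂ V W]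

structure IsStableDotNilpotent (χ : V → ℂ) (M : Submodule ℂ W) : Prop where
  lie_mem : ∀ y ∈ modesFrom V 1, ∀ m ∈ M, ⁅y, m⁆ ∈ M
  le_maxGenEigenspace : ∀ y ∈ modesFrom V 1, M ≤ (toEnd ℂ V W y).maxGenEigenspace (χ y)

variable {χ : V → ℂ}

theorem isStableDotNilpotent_span_singleton {w : W}
    (hw : ∀ y ∈ modesFrom V 1, ⁅y, w⁆ = χ y • w) : IsStableDotNilpotent χ (ℂ ∙ w) where
  lie_mem y hy m hm := by
    obtain ⟨a, rfl⟩ := Submodule.mem_span_singleton.1 hm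
    rw [lie_smul, hw y hy]
    exact Submodule.smul_mem _ _ (Submodule.smul_mem _ _ (Submodule.mem_span_singleton_self w))
  le_maxGenEigenspace y hy := by
    rw [Submodule.span_singleton_le_iff_mem, Module.End.mem_maxGenEigenspace]
    exact ⟨1, by simp [hw y hy]⟩

theorem IsStableDotNilpotent.sSup {S : Set (Submodule ℂ W)}
    (hS : ∀ M ∈ S, IsStableDotNilpotent χ M) : IsStableDotNilpotent χ (sSup S) where
  lie_mem y hy := sSup_le fun M hM m hm =>
    Submodule.comap_mono (f := toEnd ℂ V W y) (le_sSup hM) ((hS M hM).lie_mem y hy m hm)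
  le_maxGenEigenspace y hy := sSup_le fun M hM => (hS M hM).le_maxGenEigenspace y hy

theorem IsStableDotNilpotent.lie_mem_maxGenEigenspace_of_mem_degGe_one
    {M : Submodule ℂ W} (hM : IsStableDotNilpotent χ M) {y : V} (hy : y ∈ modesFrom V 1)
    {x : V} (hx : x ∈ degGe V 1) {m : W} (hm : m ∈ M) :
    ⁅x, m⁆ ∈ (toEnd ℂ V W y).maxGenEigenspace (χ y) := by
  induction hx using Submodule.span_induction with
  | mem x hx =>
    obtain hx | ⟨i, rfl⟩ := hx
    · exact hM.le_maxGenEigenspace y hy (hM.lie_mem x hx m hm)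
    · rw [← zero_add (χ y)]
      refine lie_mem_maxGenEigenspace_toEnd ?_ (hM.le_maxGenEigenspace y hy hm)
      exact (Module.End.mem_maxGenEigenspace _ _ _).2 ⟨1, by simp [lie_z_right]⟩
  | zero => rw [zero_lie]; exact zero_mem _
  | add a b _ _ ha hb => rw [add_lie]; exact add_mem ha hb
  | smul c a _ ha => rw [smul_lie]; exact Submodule.smul_mem _ c ha

/-- For `i ≥ 1 - d`, `(ad y)ⁱ` maps `degGe d` into `degGe 1`, whose brackets with `M` stay in
the generalized eigenspace. -/
theorem IsStableDotNilpotent.bracketSup {M : Submodule ℂ W} (hM : IsStableDotNilpotent χ M)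
    (d : ℤ) : IsStableDotNilpotent χ (bracketSup (degGe V d) M) where
  lie_mem y hy _ := lie_mem_bracketSup_of_mem
    (fun x hx => degGe_antitone (by omega) (lie_mem_degGe_add_one hy hx)) (hM.lie_mem y hy)
  le_maxGenEigenspace y hy := by
    refine bracketSup_le (hM.le_maxGenEigenspace y hy) fun x hx m hm => ?_
    refine lie_mem_maxGenEigenspace_of_ad_pow (hM.lie_mem y hy) (r := (1 - d).toNat)
      (fun i hi n hn => hM.lie_mem_maxGenEigenspace_of_mem_degGe_one hy ?_ hn) hm
      (hM.le_maxGenEigenspace y hy hm)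
    exact degGe_antitone (by omega) (ad_pow_mem_degGe hy hx i)

variable (W) in
def dotNilpotentPart (χ : V → ℂ) : LieSubmodule ℂ V W :=
  { sSup {M : Submodule ℂ W | IsStableDotNilpotent χ M} with
    lie_mem := fun {x m} hm => by
      obtain ⟨d, hd⟩ := exists_mem_degGe x
      exact le_sSup ((IsStableDotNilpotent.sSup fun _ h => h).bracketSup d)
        (lie_mem_bracketSup hd hm) }

theorem isStableDotNilpotent_dotNilpotentPart :
    IsStableDotNilpotent χ (dotNilpotentPart W χ : Submodule ℂ W) :=
  IsStableDotNilpotent.sSup fun _ h => h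

theorem IsStableDotNilpotent.le_dotNilpotentPart {M : Submodule ℂ W}
    (hM : IsStableDotNilpotent χ M) : M ≤ (dotNilpotentPart W χ : Submodule ℂ W) :=
  le_sSup hM

end Module

end THV

open THV in
theorem dot_action_locally_nilpotent_general
    (V : Type) [LieRing V] [LieAlgebra ℂ V] [THV V]
    (ψ : nPlus V →ₗ⁅ℂ⁆ ℂ)
    (W : Type) [AddCommGroup W] [Module ℂ W] [LieRingModule V W] [LieModule ℂ V W]
    (wc : W) (hwc : IsWhittakerVector V ψ wc)
    (hgen : LieSubmodule.lieSpan ℂ V {wc} = ⊤)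
    (n : ℤ) (hn : 1 ≤ n) (v : W) :
    (∃ N : ℕ,
      ((LieModule.toEnd ℂ V W (THV.L n) -
        ψ ⟨THV.L n, L_mem_nPlus V hn⟩ • (1 : Module.End ℂ W)) ^ N) v = 0) ∧
    (∃ N : ℕ,
      ((LieModule.toEnd ℂ V W (THV.I n) -
        ψ ⟨THV.I n, I_mem_nPlus V hn⟩ • (1 : Module.End ℂ W)) ^ N) v = 0) := by
  classical
  let χ : V → ℂ := fun y => if h : y ∈ nPlus V then ψ ⟨y, h⟩ else 0
  have hχ (y : V) (hy : y ∈ nPlus V) : χ y = ψ ⟨y, hy⟩ := dif_pos hy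
  have hwc_span : IsStableDotNilpotent χ (ℂ ∙ wc) :=
    isStableDotNilpotent_span_singleton fun y hy => by
      rw [hχ y (LieSubalgebra.subset_lieSpan hy)]
      exact hwc ⟨y, _⟩
  have hv : v ∈ dotNilpotentPart W χ := by
    have hle : LieSubmodule.lieSpan ℂ V {wc} ≤ dotNilpotentPart W χ :=
      LieSubmodule.lieSpan_le.2 <| Set.singleton_subset_iff.2 <|
        hwc_span.le_dotNilpotentPart (Submodule.mem_span_singleton_self wc)
    exact hle (hgen ▸ LieSubmodule.mem_top v)
  have hE {y : V} (hy : y ∈ modesFrom V 1) :=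
    (Module.End.mem_maxGenEigenspace _ _ _).1
      (isStableDotNilpotent_dotNilpotentPart.le_maxGenEigenspace y hy hv)
  exact ⟨hχ _ (L_mem_nPlus V hn) ▸ hE ⟨n, hn, Or.inl rfl⟩,
    hχ _ (I_mem_nPlus V hn) ▸ hE ⟨n, hn, Or.inr rfl⟩⟩

open THV in
/-- the dot-action operators `L_n − ψ(L_n)` and `I_n − ψ(I_n)` (`n > 0`) are
locally nilpotent on any Whittaker module of type `ψ`. -/
theorem dot_action_locally_nilpotent
    (V : Type) [LieRing V] [LieAlgebra ℂ V] [THV V]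
    (ψ : nPlus V →ₗ⁅ℂ⁆ ℂ)
    (hL1 : ψ ⟨THV.L 1, L_mem_nPlus V le_rfl⟩ ≠ 0)
    (hL2 : ψ ⟨THV.L 2, L_mem_nPlus V one_le_two⟩ ≠ 0)
    (hI1 : ψ ⟨THV.I 1, I_mem_nPlus V le_rfl⟩ ≠ 0)
    (W : Type) [AddCommGroup W] [Module ℂ W] [LieRingModule V W] [LieModule ℂ V W]
    (wc : W) (hwc : IsWhittakerVector V ψ wc)
    (hgen : LieSubmodule.lieSpan ℂ V {wc} = ⊤)
    (n : ℤ) (hn : 1 ≤ n) (v : W) :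
    (∃ N : ℕ,
      ((LieModule.toEnd ℂ V W (THV.L n) -
        ψ ⟨THV.L n, L_mem_nPlus V hn⟩ • (1 : Module.End ℂ W)) ^ N) v = 0) ∧
    (∃ N : ℕ,
      ((LieModule.toEnd ℂ V W (THV.I n) -
        ψ ⟨THV.I n, I_mem_nPlus V hn⟩ • (1 : Module.End ℂ W)) ^ N) v = 0) :=
  dot_action_locally_nilpotent_general V ψ W wc hwc hgen n hn v
end

section
/- Let ψ : 𝔫⁺ → ℂ be a Lie algebra homomorphism with ψ(L_1) ≠ 0, ψ(L_2) ≠ 0, ψ(I_1) ≠ 0, and let V be a Whittaker module of type ψ for 𝒱. Regard V as an 𝔫⁺-module under the dot action x · v = xv − ψ(x)v. Then for every v ∈ V, the 𝔫⁺-submodule U(𝔫⁺) · v generated by v under the dot action is a finite-dimensional subspace of V. -/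
/-!
Common setup: the twisted Heisenberg–Virasoro algebra `𝒱`, its subalgebra `𝔫⁺`,
the universal Whittaker module `M_ψ`, the quotients `L_{ψ,ξ}`, and the notions of
Whittaker vectors/modules, degrees, etc.
-/

open UniversalEnvelopingAlgebra

attribute [instance 100] LieRing.ofAssociativeRing

/-!
Choose the graded basis `b` of `𝒱` in which `L_k`, `I_k` have degree `k` and the `z_i` degree
`0`. Since `w` generates, every vector is a combination of words `b i₁ ⋯ b iₘ w`; let `S(n, e)`
be the span of the words of length `≤ n` and degree `≥ e`. For `g` of positive degree the dot
action satisfies `b g · (b f u) = [b g, b f] u + b f (b g · u)` and `b g · w = 0`, so by induction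
on the length `S(n, e)` is stable under `𝔫⁺`. Moving a positive letter to the right in the same
way rewrites a word as commutator terms (shorter words of no smaller degree) plus `ψ (b g)` times
the word with that letter deleted, and `ψ (b g) = 0` in degree `> 2` since `ψ` kills
`[𝔫⁺, 𝔫⁺]`. Hence `S(n, e)` is spanned by the words of length `≤ n` all of whose letters have
degree in `[e - 2n, 0]`, and there are finitely many of these.
-/

open LieModule Submodule

lemma List.sum_le_of_mem_of_nonpos {M : Type*} [AddCommMonoid M] [PartialOrder M]
    [IsOrderedAddMonoid M] {l : List M} (hl : ∀ x ∈ l, x ≤ 0) {x : M} (hx : x ∈ l) :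
    l.sum ≤ x :=
  @List.single_le_sum Mᵒᵈ _ _ _ l hl x hx

lemma Submodule.smul_add_ite_smul_mem {R M : Type*} [Semiring R] [AddCommMonoid M] [Module R M]
    {P : Submodule R M} {x y : M} (c c' : R) {p : Prop} [Decidable p]
    (hx : x ∈ P) (hy : p → y ∈ P) : c • x + (if p then c' else 0) • y ∈ P := by
  split_ifs with h
  · exact add_mem (P.smul_mem c hx) (P.smul_mem c' (hy h))
  · simpa using P.smul_mem c hx

theorem LieSubalgebra.map_lie_eq_zero_of_extends {R L : Type*} [CommRing R] [LieRing L]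
    [LieAlgebra R L] {𝔫 : LieSubalgebra R L} (ψ : 𝔫 →ₗ⁅R⁆ R) {φ : L →ₗ[R] R}
    (hφ : ∀ x : 𝔫, φ x = ψ x) {x y : L} (hx : x ∈ 𝔫) (hy : y ∈ 𝔫) :
    φ ⁅x, y⁆ = 0 := by
  simpa [Ring.lie_def, mul_comm] using hφ ⁅(⟨x, hx⟩ : 𝔫), ⟨y, hy⟩⁆

namespace GradedWhittaker

variable {K 𝔤 W ι : Type*} [Field K] [LieRing 𝔤] [LieAlgebra K 𝔤]
  [AddCommGroup W] [Module K W] [LieRingModule 𝔤 W] [LieModule K 𝔤 W]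
  (b : ι → 𝔤) (deg : ι → ℤ)

variable (K) in
def IsBracketGraded : Prop :=
  ∀ i j, ⁅b i, b j⁆ ∈ span K (b '' {h | deg h = deg i + deg j})

variable (K) in
noncomputable def word (l : List ι) : Module.End K W :=
  (l.map fun i => toEnd K 𝔤 W (b i)).prod

lemma word_nil (w : W) : word K b [] w = w := rfl

lemma word_cons (i : ι) (l : List ι) (w : W) : word K b (i :: l) w = ⁅b i, word K b l w⁆ := by
  simp [word]

lemma word_append (l₁ l₂ : List ι) (w : W) :
    word K b (l₁ ++ l₂) w = word K b l₁ (word K b l₂ w) := by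
  simp [word]

variable (K) in
noncomputable def wordSpan (A : Set ι) (w : W) (n : ℕ) (e : ℤ) : Submodule K W :=
  span K {x | ∃ l : List ι,
    (∀ i ∈ l, i ∈ A) ∧ l.length ≤ n ∧ e ≤ (l.map deg).sum ∧ word K b l w = x}

variable {b deg}

lemma word_mem_wordSpan {A : Set ι} {w : W} {l : List ι} {n : ℕ} {e : ℤ}
    (hA : ∀ i ∈ l, i ∈ A) (hn : l.length ≤ n) (he : e ≤ (l.map deg).sum) :
    word K b l w ∈ wordSpan K b deg A w n e :=
  subset_span ⟨l, hA, hn, he, rfl⟩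

lemma wordSpan_mono {A A' : Set ι} {w : W} {n n' : ℕ} {e e' : ℤ} (hA : A ⊆ A')
    (hn : n ≤ n') (he : e' ≤ e) : wordSpan K b deg A w n e ≤ wordSpan K b deg A' w n' e' :=
  span_mono fun _ ⟨l, hl, hln, hle, hx⟩ =>
    ⟨l, fun i hi => hA (hl i hi), hln.trans hn, he.trans hle, hx⟩

lemma word_apply_mem_wordSpan {w x : W} {n : ℕ} {e : ℤ} (l : List ι)
    (hx : x ∈ wordSpan K b deg Set.univ w n e) :
    word K b l x ∈ wordSpan K b deg Set.univ w (l.length + n) ((l.map deg).sum + e) := by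
  refine (map_span_le (word K b l) _ _).2 ?_ (mem_map_of_mem hx)
  rintro _ ⟨m, -, hm, he, rfl⟩
  rw [← word_append]
  exact word_mem_wordSpan (by simp) (by simpa using hm) (by simpa using he)

lemma lie_mem_of_mem_span {s : Set 𝔤} {y : 𝔤} (hy : y ∈ span K s) {x : W}
    {N : Submodule K W} (h : ∀ z ∈ s, ⁅z, x⁆ ∈ N) : ⁅y, x⁆ ∈ N :=
  span_le (p := N.comap ((toEnd K 𝔤 W : 𝔤 →ₗ[K] Module.End K W).flip x)).2 h hy

variable (φ : 𝔤 →ₗ[K] K)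

lemma lie_sub_smul_word_mem_wordSpan
    (hgr : IsBracketGraded K b deg)
    {w : W} (hw : ∀ i, 0 < deg i → ⁅b i, w⁆ = φ (b i) • w) {g : ι} (hg : 0 < deg g)
    (l : List ι) :
    ⁅b g, word K b l w⁆ - φ (b g) • word K b l w ∈
      wordSpan K b deg Set.univ w l.length ((l.map deg).sum + deg g) := by
  induction l with
  | nil => simp [word_nil, hw g hg]
  | cons f l ih =>
    have hleibniz : ⁅b g, word K b (f :: l) w⁆ - φ (b g) • word K b (f :: l) w =
        ⁅⁅b g, b f⁆, word K b l w⁆ +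
          ⁅b f, ⁅b g, word K b l w⁆ - φ (b g) • word K b l w⁆ := by
      rw [word_cons, lie_sub, lie_smul, leibniz_lie]
      abel
    rw [hleibniz]
    refine add_mem (lie_mem_of_mem_span (hgr g f) ?_) ?_
    · rintro _ ⟨h, hh : deg h = deg g + deg f, rfl⟩
      rw [← word_cons]
      exact word_mem_wordSpan (by simp) le_rfl (by simp; omega)
    · have := word_apply_mem_wordSpan [f] ih
      rw [word_cons, word_nil] at this
      exact wordSpan_mono le_rfl (by simp [add_comm]) (by simp; omega) this

lemma word_append_cons (l₁ l₂ : List ι) (g : ι) (w : W) :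
    word K b (l₁ ++ g :: l₂) w =
      word K b l₁ (⁅b g, word K b l₂ w⁆ - φ (b g) • word K b l₂ w) +
        φ (b g) • word K b (l₁ ++ l₂) w := by
  simp only [word_append, word_cons, map_sub, map_smul]
  abel

theorem wordSpan_le_wordSpan_nonpos
    (hgr : IsBracketGraded K b deg)
    {w : W} (hw : ∀ i, 0 < deg i → ⁅b i, w⁆ = φ (b i) • w)
    (d : ℕ) (hφ : ∀ i, (d : ℤ) < deg i → φ (b i) = 0) (n : ℕ) (e : ℤ) :
    wordSpan K b deg Set.univ w n e ≤ wordSpan K b deg {i | deg i ≤ 0} w n (e - d * n) := by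
  induction n generalizing e with
  | zero =>
    refine span_le.2 ?_
    rintro _ ⟨l, -, hl, he, rfl⟩
    obtain rfl : l = [] := List.eq_nil_of_length_eq_zero (Nat.le_zero.1 hl)
    exact word_mem_wordSpan (by simp) le_rfl (by simpa using he)
  | succ n ih =>
    have ih' : ∀ {n' : ℕ} {e' : ℤ}, n' ≤ n → e - d * (n + 1 : ℕ) ≤ e' - d * n →
        wordSpan K b deg Set.univ w n' e' ≤
          wordSpan K b deg {i | deg i ≤ 0} w (n + 1) (e - d * (n + 1 : ℕ)) :=
      fun hn he => (wordSpan_mono subset_rfl hn le_rfl).trans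
        ((ih _).trans (wordSpan_mono subset_rfl n.le_succ he))
    refine span_le.2 ?_
    rintro _ ⟨l, -, hl, he, rfl⟩
    by_cases hnonpos : ∀ i ∈ l, deg i ≤ 0
    · exact word_mem_wordSpan hnonpos hl (by push_cast; nlinarith)
    push Not at hnonpos
    obtain ⟨g, hgl, hg⟩ := hnonpos
    obtain ⟨l₁, l₂, rfl⟩ := List.append_of_mem hgl
    simp only [List.length_append, List.length_cons, List.map_append, List.map_cons,
      List.sum_append, List.sum_cons] at hl he
    rw [word_append_cons φ]
    refine add_mem (ih' (by omega) (by push_cast; linarith) (word_apply_mem_wordSpan l₁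
      (lie_sub_smul_word_mem_wordSpan φ hgr hw hg l₂))) ?_
    by_cases hφg : φ (b g) = 0
    · simp [hφg]
    have hgd : deg g ≤ d := not_lt.1 (mt (hφ g) hφg)
    refine smul_mem _ _ (ih' le_rfl ?_ (word_mem_wordSpan (e := e - deg g) (by simp)
      (by simp; omega) (by simp; omega)))
    push_cast; linarith

theorem finiteDimensional_wordSpan_nonpos (hfin : ∀ e, {i | e ≤ deg i ∧ deg i ≤ 0}.Finite)
    (w : W) (n : ℕ) (e : ℤ) :
    FiniteDimensional K (wordSpan K b deg {i | deg i ≤ 0} w n e) := by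
  have := (hfin e).to_subtype
  refine FiniteDimensional.span_of_finite K
    (((List.finite_length_le {i | e ≤ deg i ∧ deg i ≤ 0} n).image
      fun l => word K b (l.map Subtype.val) w).subset ?_)
  rintro _ ⟨l, hl, hn, he, rfl⟩
  refine ⟨l.attach.map fun i => ⟨i.1, ?_, hl i.1 i.2⟩, by simpa using hn, by simp⟩
  exact he.trans (List.sum_le_of_mem_of_nonpos (by simpa using hl) (List.mem_map_of_mem i.2))

theorem span_range_word_eq_top (hb : span K (Set.range b) = ⊤) {w : W}
    (hgen : LieSubmodule.lieSpan K 𝔤 {w} = ⊤) :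
    span K (Set.range fun l => word K b l w) = ⊤ := by
  let N : LieSubmodule K 𝔤 W :=
    { span K (Set.range fun l => word K b l w) with
      lie_mem := fun {x m} hm => by
        refine lie_mem_of_mem_span (hb ▸ mem_top : x ∈ span K (Set.range b)) ?_
        rintro _ ⟨i, rfl⟩
        refine (map_span_le (toEnd K 𝔤 W (b i)) _ _).2 ?_ (mem_map_of_mem hm)
        rintro _ ⟨l, rfl⟩
        exact subset_span ⟨i :: l, word_cons b i l w⟩ }
  have hN : LieSubmodule.lieSpan K 𝔤 {w} ≤ N :=
    LieSubmodule.lieSpan_le.2 (Set.singleton_subset_iff.2 (subset_span ⟨[], rfl⟩))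
  exact eq_top_iff.2 fun v _ => (hgen ▸ hN : ⊤ ≤ N) (LieSubmodule.mem_top v)

theorem exists_mem_wordSpan (hb : span K (Set.range b) = ⊤) {w : W}
    (hgen : LieSubmodule.lieSpan K 𝔤 {w} = ⊤) (v : W) :
    ∃ n e, v ∈ wordSpan K b deg Set.univ w n e := by
  have hv : v ∈ span K (Set.range fun l => word K b l w) :=
    span_range_word_eq_top hb hgen ▸ mem_top
  induction hv using span_induction with
  | mem _ hx =>
    obtain ⟨l, rfl⟩ := hx
    exact ⟨l.length, (l.map deg).sum, word_mem_wordSpan (by simp) le_rfl le_rfl⟩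
  | zero => exact ⟨0, 0, zero_mem _⟩
  | add x y _ _ hx hy =>
    obtain ⟨n₁, e₁, hx⟩ := hx
    obtain ⟨n₂, e₂, hy⟩ := hy
    exact ⟨max n₁ n₂, min e₁ e₂, add_mem
      (wordSpan_mono subset_rfl (le_max_left _ _) (min_le_left _ _) hx)
      (wordSpan_mono subset_rfl (le_max_right _ _) (min_le_right _ _) hy)⟩
  | smul c x _ hx =>
    obtain ⟨n, e, hx⟩ := hx
    exact ⟨n, e, smul_mem _ c hx⟩

theorem lie_sub_smul_mem_wordSpan
    (hgr : IsBracketGraded K b deg)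
    {w : W} (hw : ∀ i, 0 < deg i → ⁅b i, w⁆ = φ (b i) • w)
    {x : 𝔤} (hx : x ∈ span K (b '' {i | 0 < deg i})) {n : ℕ} {e : ℤ}
    {s : W} (hs : s ∈ wordSpan K b deg Set.univ w n e) :
    ⁅x, s⁆ - φ x • s ∈ wordSpan K b deg Set.univ w n e := by
  set S := wordSpan K b deg Set.univ w n e
  let dot : 𝔤 →ₗ[K] Module.End K W :=
    (toEnd K 𝔤 W : 𝔤 →ₗ[K] Module.End K W) - φ.smulRight 1
  suffices x ∈ (compatibleMaps S S).comap dot by simpa [dot] using this hs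
  refine span_le.2 ?_ hx
  rintro _ ⟨g, hg : 0 < deg g, rfl⟩
  refine span_le.2 ?_
  rintro _ ⟨l, -, hn, he, rfl⟩
  refine wordSpan_mono (e := (l.map deg).sum + deg g) subset_rfl hn (by omega) ?_
  simpa [dot] using lie_sub_smul_word_mem_wordSpan φ hgr hw hg l

variable (b deg) in
noncomputable def positivePart
    (hgr : IsBracketGraded K b deg) :
    LieSubalgebra K 𝔤 :=
  { span K (b '' {i | 0 < deg i}) with
    lie_mem' := fun {x y} hx hy => by
      refine (map₂_le (f := (toEnd K 𝔤 𝔤 : 𝔤 →ₗ[K] Module.End K 𝔤))).1 ?_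
        x hx y hy
      rw [map₂_span_span, span_le]
      rintro _ ⟨_, ⟨i, hi : 0 < deg i, rfl⟩, _, ⟨j, hj : 0 < deg j, rfl⟩, rfl⟩
      refine span_mono ?_ (hgr i j)
      rintro _ ⟨h, hh : deg h = deg i + deg j, rfl⟩
      exact ⟨h, show 0 < deg h by omega, rfl⟩ }

theorem exists_finiteDimensional_dot_invariant (hb : span K (Set.range b) = ⊤)
    (hgr : IsBracketGraded K b deg)
    (hfin : ∀ e, {i | e ≤ deg i ∧ deg i ≤ 0}.Finite)
    (d : ℕ) (hφ : ∀ i, (d : ℤ) < deg i → φ (b i) = 0)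
    {w : W} (hw : ∀ i, 0 < deg i → ⁅b i, w⁆ = φ (b i) • w)
    (hgen : LieSubmodule.lieSpan K 𝔤 {w} = ⊤) (v : W) :
    ∃ S : Submodule K W, v ∈ S ∧ FiniteDimensional K S ∧
      ∀ x ∈ positivePart b deg hgr, ∀ s ∈ S, ⁅x, s⁆ - φ x • s ∈ S := by
  obtain ⟨n, e, hv⟩ := exists_mem_wordSpan (deg := deg) hb hgen v
  have := finiteDimensional_wordSpan_nonpos (K := K) (b := b) hfin w n (e - d * n)
  exact ⟨_, hv,
    Submodule.finiteDimensional_of_le (wordSpan_le_wordSpan_nonpos φ hgr hw d hφ n e),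
    fun x hx s hs => lie_sub_smul_mem_wordSpan φ hgr hw hx hs⟩

end GradedWhittaker

namespace THV

variable (V : Type) [LieRing V] [LieAlgebra ℂ V] [THV V]

def deg : ℤ ⊕ ℤ ⊕ Fin 3 → ℤ
  | .inl k => k
  | .inr (.inl k) => k
  | .inr (.inr _) => 0

theorem isBracketGraded_basis : GradedWhittaker.IsBracketGraded ℂ (⇑(basis (V := V))) deg := by
  intro a c
  set P := span ℂ (⇑(basis (V := V)) '' {h | deg h = deg a + deg c})
  have memL : ∀ k, k = deg a + deg c → L k ∈ P :=
    fun k hk => subset_span ⟨.inl k, hk, basis_L k⟩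
  have memI : ∀ k, k = deg a + deg c → I k ∈ P :=
    fun k hk => subset_span ⟨.inr (.inl k), hk, basis_I k⟩
  have memz : ∀ i, 0 = deg a + deg c → z i ∈ P :=
    fun i hi => subset_span ⟨.inr (.inr i), hi, basis_z i⟩
  have lie_z_right : ∀ (x : V) (i : Fin 3), ⁅x, (z i : V)⁆ = 0 :=
    fun x i => by rw [← lie_skew, lie_z, neg_zero]
  rcases a with k | k | i <;> rcases c with j | j | j <;>
    simp only [basis_L, basis_I, basis_z, lie_z, lie_z_right, zero_mem]
  · rw [lie_LL]
    exact smul_add_ite_smul_mem _ _ (memL _ rfl) fun h => memz _ (by simp [deg]; omega)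
  · rw [lie_LI]
    exact smul_add_ite_smul_mem _ _ (memI _ rfl) fun h => memz _ (by simp [deg]; omega)
  · rw [← lie_skew, lie_LI]
    exact neg_mem <|
      smul_add_ite_smul_mem _ _ (memI _ (add_comm _ _)) fun h => memz _ (by simp [deg]; omega)
  · rw [lie_II]
    split_ifs with h
    exacts [smul_mem _ _ (memz _ (by simp [deg]; omega)), by simp]

theorem finite_deg_Icc (e : ℤ) : {i | e ≤ deg i ∧ deg i ≤ 0}.Finite := by
  refine (Set.finite_Icc e 0).preimage' fun m _ => ?_
  refine (((Set.finite_singleton (Sum.inl m)).insert (Sum.inr (Sum.inl m))).union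
    (Set.finite_range fun i : Fin 3 => Sum.inr (Sum.inr i))).subset ?_
  rintro (k | k | i) (h : deg _ = m) <;> simp_all [deg]

theorem basis_mem_nPlus {i : ℤ ⊕ ℤ ⊕ Fin 3} (hi : 0 < deg i) : basis i ∈ nPlus V := by
  rcases i with k | k | i
  · exact basis_L (V := V) k ▸ L_mem_nPlus V hi
  · exact basis_I (V := V) k ▸ I_mem_nPlus V hi
  · exact absurd hi (lt_irrefl 0)

theorem nPlus_le_positivePart :
    nPlus V ≤ GradedWhittaker.positivePart (⇑basis) deg (isBracketGraded_basis V) :=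
  LieSubalgebra.lieSpan_le.2 <| by
    rintro _ ⟨k, hk, rfl | rfl⟩
    · exact subset_span ⟨.inl k, show 0 < k by omega, basis_L k⟩
    · exact subset_span ⟨.inr (.inl k), show 0 < k by omega, basis_I k⟩

variable {V} {ψ : nPlus V →ₗ⁅ℂ⁆ ℂ} {φ : V →ₗ[ℂ] ℂ}

theorem extension_basis_eq_zero (hφ : ∀ x : nPlus V, φ x = ψ x) {i : ℤ ⊕ ℤ ⊕ Fin 3}
    (hi : 2 < deg i) : φ (basis i) = 0 := by
  have hL1 := L_mem_nPlus V le_rfl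
  rcases i with k | k | i <;> simp only [deg] at hi
  · have h := LieSubalgebra.map_lie_eq_zero_of_extends ψ hφ hL1
      (L_mem_nPlus V (k := k - 1) (by omega))
    rw [lie_LL, if_neg (by omega), zero_smul, add_zero, add_sub_cancel, map_smul, smul_eq_mul] at h
    rw [basis_L]
    exact (mul_eq_zero.1 h).resolve_left (by exact_mod_cast (by omega : k - 1 - 1 ≠ 0))
  · have h := LieSubalgebra.map_lie_eq_zero_of_extends ψ hφ hL1
      (I_mem_nPlus V (k := k - 1) (by omega))
    rw [lie_LI, if_neg (by omega), zero_smul, add_zero, add_sub_cancel, map_smul, smul_eq_mul] at h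
    rw [basis_I]
    exact (mul_eq_zero.1 h).resolve_left (by exact_mod_cast (by omega : k - 1 ≠ 0))
  · omega

end THV

open THV in
theorem dot_action_submodule_finiteDimensional_general
    (V : Type) [LieRing V] [LieAlgebra ℂ V] [THV V]
    (ψ : nPlus V →ₗ⁅ℂ⁆ ℂ)
    (W : Type) [AddCommGroup W] [Module ℂ W] [LieRingModule V W] [LieModule ℂ V W]
    (wc : W) (hwc : IsWhittakerVector V ψ wc)
    (hgen : LieSubmodule.lieSpan ℂ V {wc} = ⊤)
    (v : W) :
    FiniteDimensional ℂ
      ↥(sInf {S : Submodule ℂ W | v ∈ S ∧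
          ∀ x : nPlus V, ∀ s ∈ S, ⁅(x : V), s⁆ - ψ x • s ∈ S}) := by
  obtain ⟨φ, hφ⟩ :=
    LinearMap.exists_extend (p := (nPlus V).toSubmodule) (ψ : nPlus V →ₗ[ℂ] ℂ)
  have hφψ : ∀ x : nPlus V, φ x = ψ x := LinearMap.congr_fun hφ
  have hw : ∀ i, 0 < deg i → ⁅basis i, wc⁆ = φ (basis i) • wc := fun i hi =>
    (hφψ ⟨_, basis_mem_nPlus V hi⟩).symm ▸ hwc ⟨_, basis_mem_nPlus V hi⟩
  obtain ⟨S, hvS, hS, hdot⟩ := GradedWhittaker.exists_finiteDimensional_dot_invariant φ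
    basis.span_eq (isBracketGraded_basis V) finite_deg_Icc 2
    (fun i hi => extension_basis_eq_zero hφψ hi) hw hgen v
  refine Submodule.finiteDimensional_of_le (sInf_le ⟨hvS, fun x s hs => ?_⟩)
  simpa only [hφψ] using hdot x (nPlus_le_positivePart V x.2) s hs

open THV in
/-- under the dot action, the `𝔫⁺`-submodule generated by any vector of a
Whittaker module is finite dimensional. -/
theorem dot_action_submodule_finiteDimensional
    (V : Type) [LieRing V] [LieAlgebra ℂ V] [THV V]
    (ψ : nPlus V →ₗ⁅ℂ⁆ ℂ)
    (hL1 : ψ ⟨THV.L 1, L_mem_nPlus V le_rfl⟩ ≠ 0)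
    (hL2 : ψ ⟨THV.L 2, L_mem_nPlus V one_le_two⟩ ≠ 0)
    (hI1 : ψ ⟨THV.I 1, I_mem_nPlus V le_rfl⟩ ≠ 0)
    (W : Type) [AddCommGroup W] [Module ℂ W] [LieRingModule V W] [LieModule ℂ V W]
    (wc : W) (hwc : IsWhittakerVector V ψ wc)
    (hgen : LieSubmodule.lieSpan ℂ V {wc} = ⊤)
    (v : W) :
    FiniteDimensional ℂ
      ↥(sInf {S : Submodule ℂ W | v ∈ S ∧
          ∀ x : nPlus V, ∀ s ∈ S, ⁅(x : V), s⁆ - ψ x • s ∈ S}) :=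
  dot_action_submodule_finiteDimensional_general V ψ W wc hwc hgen v
end
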